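/- Let ε > 0 and let w be a point of the upper half-plane ℍ with u(i, w) ≤ sinh²(ε/2). Then (1 + |w − i|) / Im(w) ≤ 2 e^ε − 1. -/

import Mathlib

open MeasureTheory

/-- `u(z,w) = |z − w|² / (4 Im z Im w)`. -/
noncomputable def hypu (z w : ℂ) : ℝ :=
  ‖z - w‖ ^ 2 / (4 * z.im * w.im)

/-! The hyperbolic distance `d(i, w)` bounds `Im w` from below by `e^{-d}` and the Euclidean
distance `|w − i|` from above by `Im w (e^d − 1)`; adding the two estimates gives the claim. -/

namespace UpperHalfPlane

open Real

theorem hypu_eq_sinh_half_dist_sq (z w : ℍ) : hypu z w = sinh (dist z w / 2) ^ 2 := by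
  rw [sinh_half_dist, div_pow, mul_pow, sq_sqrt (by positivity), hypu, ← dist_eq_norm, coe_im, coe_im]
  ring

theorem dist_le_iff_hypu_le {z w : ℍ} {r : ℝ} (hr : 0 ≤ r) :
    dist z w ≤ r ↔ hypu z w ≤ sinh (r / 2) ^ 2 := by
  rw [hypu_eq_sinh_half_dist_sq, sq_le_sq₀ (sinh_nonneg_iff.2 (by positivity))
    (sinh_nonneg_iff.2 (by positivity)), sinh_le_sinh, div_le_div_iff_of_pos_right two_pos]

theorem im_add_dist_coe_le (z w : ℍ) :
    z.im + dist (z : ℂ) w ≤ w.im * (2 * Real.exp (dist z w) - 1) := by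
  linarith [im_le_im_mul_exp_dist z w, dist_coe_le z w]

end UpperHalfPlane

/-- For `ε > 0` and `w ∈ ℍ` with `u(i,w) ≤ sinh²(ε/2)`, one has
`(1 + |w − i|) / Im w ≤ 2 e^ε − 1`. -/
theorem stmt10 (ε : ℝ) (hε : 0 < ε) (w : ℂ) (hw : 0 < w.im)
    (h : hypu Complex.I w ≤ Real.sinh (ε / 2) ^ 2) :
    (1 + ‖w - Complex.I‖) / w.im ≤ 2 * Real.exp ε - 1 := by
  set w' : UpperHalfPlane := ⟨w, hw⟩
  have hdist : dist UpperHalfPlane.I w' ≤ ε :=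
    (UpperHalfPlane.dist_le_iff_hypu_le hε.le).2 h
  have hbound := UpperHalfPlane.im_add_dist_coe_le UpperHalfPlane.I w'
  rw [UpperHalfPlane.I_im, UpperHalfPlane.coe_I, dist_comm, dist_eq_norm] at hbound
  rw [div_le_iff₀ hw]
  calc 1 + ‖w - Complex.I‖ ≤ w.im * (2 * Real.exp (dist UpperHalfPlane.I w') - 1) := hbound
    _ ≤ (2 * Real.exp ε - 1) * w.im := by
      rw [mul_comm]; gcongr
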